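/- Let G and G' be graphs on nodes {a,b,c,d} with symmetric weights: in G, E(a,b)=1, self loop weight of c contributes 8 to volume, self loop of d contributes 1; in G', E(a,b)=2 with the same self loops; all other weights 0. Let C = {{a,b,c},{d}} and D = {{a},{b},{c,d}}. Then G' is a C-consistent improvement of G, G is a D-consistent improvement of G', and Q(G,C) = 20/121 > 16/121 = Q(G,D), but Q(G',C) = 24/169 < 28/169 = Q(G',D). Hence modularity is not relatively monotonic. -/

import Mathlib

open Finset

noncomputable def vol {V : Type*} [Fintype V] (E : V → V → ℝ) (c : Finset V) : ℝ :=
  ∑ i ∈ c, ∑ j, E i j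

noncomputable def win {V : Type*} (E : V → V → ℝ) (c : Finset V) : ℝ :=
  ∑ i ∈ c, ∑ j ∈ c, E i j

noncomputable def Qmod {V : Type*} [Fintype V] (E : V → V → ℝ) (C : Finset (Finset V)) : ℝ :=
  ∑ c ∈ C, (win E c / vol E univ - (vol E c / vol E univ) ^ 2)

def samePart {V : Type*} (C : Finset (Finset V)) (i j : V) : Prop :=
  ∃ c ∈ C, i ∈ c ∧ j ∈ c

/-- `E'` is a `C`-consistent improvement of `E`. -/
def ConsImp {V : Type*} (E E' : V → V → ℝ) (C : Finset (Finset V)) : Prop :=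
  ∀ i j, (samePart C i j → E i j ≤ E' i j) ∧ (¬ samePart C i j → E' i j ≤ E i j)

/-- Graph G on {a,b,c,d}: E(a,b)=E(b,a)=1, E(c,c)=8, E(d,d)=1. -/
noncomputable def Eg : Fin 4 → Fin 4 → ℝ :=
  fun i j => !![0, 1, 0, 0; 1, 0, 0, 0; 0, 0, 8, 0; 0, 0, 0, 1] i j

/-- Graph G': same but E(a,b)=E(b,a)=2. -/
noncomputable def Eg' : Fin 4 → Fin 4 → ℝ :=
  fun i j => !![0, 2, 0, 0; 2, 0, 0, 0; 0, 0, 8, 0; 0, 0, 0, 1] i j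

/-- The clustering C = {{a,b,c},{d}}. -/
def Cc : Finset (Finset (Fin 4)) := {{0, 1, 2}, {3}}

/-- The clustering D = {{a},{b},{c,d}}. -/
def Dc : Finset (Finset (Fin 4)) := {{0}, {1}, {2, 3}}

lemma spC : samePart Cc 0 1 ∧ samePart Cc 1 0 :=
  ⟨⟨{0,1,2}, by decide, by decide, by decide⟩, ⟨{0,1,2}, by decide, by decide, by decide⟩⟩

lemma nspD : ¬ samePart Dc 0 1 ∧ ¬ samePart Dc 1 0 := by
  constructor <;> rintro ⟨c, hc, h0, h1⟩ <;> fin_cases hc <;> simp_all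

set_option maxHeartbeats 1000000 in
/-- Modularity is not relatively monotonic. -/
theorem modularity_not_relatively_monotonic :
    ConsImp Eg Eg' Cc ∧
    ConsImp Eg' Eg Dc ∧
    Qmod Eg Cc = 20 / 121 ∧ Qmod Eg Dc = 16 / 121 ∧ Qmod Eg Cc > Qmod Eg Dc ∧
    Qmod Eg' Cc = 24 / 169 ∧ Qmod Eg' Dc = 28 / 169 ∧ Qmod Eg' Cc < Qmod Eg' Dc := by
  refine ⟨?_, ?_, ?_, ?_, ?_, ?_, ?_, ?_⟩
  · intro i j
    refine ⟨fun _ => ?_, fun h => ?_⟩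
    · fin_cases i <;> fin_cases j <;> norm_num [Eg, Eg']
    · fin_cases i <;> fin_cases j <;>
        first
          | exact absurd spC.1 h
          | exact absurd spC.2 h
          | norm_num [Eg, Eg']
  · intro i j
    refine ⟨fun h => ?_, fun _ => ?_⟩
    · fin_cases i <;> fin_cases j <;>
        first
          | exact absurd h nspD.1
          | exact absurd h nspD.2
          | norm_num [Eg, Eg']
    · fin_cases i <;> fin_cases j <;> norm_num [Eg, Eg']
  all_goals
    simp only [Qmod, Cc, Dc, win, vol,
      Finset.sum_insert (by decide : ({0,1,2} : Finset (Fin 4)) ∉ ({{3}} : Finset (Finset (Fin 4)))),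
      Finset.sum_insert (by decide : ({0} : Finset (Fin 4)) ∉ ({{1},{2,3}} : Finset (Finset (Fin 4)))),
      Finset.sum_insert (by decide : ({1} : Finset (Fin 4)) ∉ ({{2,3}} : Finset (Finset (Fin 4)))),
      Finset.sum_insert (by decide : (0 : Fin 4) ∉ ({1,2} : Finset (Fin 4))),
      Finset.sum_insert (by decide : (1 : Fin 4) ∉ ({2} : Finset (Fin 4))),
      Finset.sum_insert (by decide : (2 : Fin 4) ∉ ({3} : Finset (Fin 4))),
      Finset.sum_singleton, Fin.sum_univ_four]
    norm_num [Eg, Eg', Matrix.vecHead, Matrix.vecTail, Matrix.cons_val_two, Matrix.cons_val_three]
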